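/- Let p be an odd prime, and let r, t be non-negative integers with r ≥ t and r - t even such that t_0 ≠ p - 1, r_0 ≡ t_0 (mod 2), and r_0 ≥ t_0 (where n_i denotes the i-th base-p digit of n). If (N, σ, δ, I) is an admissible quadruple for the pair (r, t) with N ≥ 1, then 0 ∉ I, σ_0 = t_0 + 1, and δ_0 = (r_0 - t_0)/2. -/

import Mathlib

/-- The `i`-th digit of the base-`p` expansion of `n`. -/
def digit (p n i : ℕ) : ℕ := n / p ^ i % p

/-- `σ_I = ∑_{i ∈ I} p^i σ_i`. -/
def digitSum (p σ : ℕ) (I : Finset ℕ) : ℕ := ∑ i ∈ I, p ^ i * digit p σ i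

/-- An admissible triple `(N, σ, δ)`. -/
def AdmissibleTriple (p N σ δ : ℕ) : Prop :=
  σ < p ^ (N + 1) - p ^ N ∧ δ < p ^ (N + 1) - p ^ N ∧
  (∀ i < N, digit p σ i + digit p δ i ≤ p - 1) ∧
  digit p σ N + digit p δ N < p - 1

/-- An admissible quadruple `(N, σ, δ, I)`. -/
def AdmissibleQuadruple (p N σ δ : ℕ) (I : Finset ℕ) : Prop :=
  AdmissibleTriple p N σ δ ∧ ∀ i ∈ I, digit p σ i ≠ 0 ∧ i ≠ N

/-- An admissible quadruple for the pair `(r, t)`. -/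
def AdmissibleQuadrupleFor (p r t N σ δ : ℕ) (I : Finset ℕ) : Prop :=
  AdmissibleQuadruple p N σ δ I ∧
  t + 2 * digitSum p σ I = p ^ N - 1 + σ ∧
  r ≡ p ^ N - 1 + σ + 2 * δ [MOD 2 * p ^ (N + 1)]


/-!
Reduce both defining relations of the quadruple modulo `p`. Since `N ≥ 1`, `p ^ N - 1 ≡ -1`,
and `σ_I ≡ σ_0` or `0` according as `0 ∈ I` or not, so the low digits satisfy
`t_0 + 2 [0 ∈ I] σ_0 + 1 ≡ σ_0` and `r_0 + 1 ≡ σ_0 + 2 δ_0`. The digit bounds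
`t_0 ≤ p - 2` and `σ_0 + δ_0 ≤ p - 1` turn these congruences into equalities, up to one multiple
of `p` that the parity hypothesis `r_0 ≡ t_0 (mod 2)` and the oddness of `p` rule out. If `0 ∈ I`,
the first congruence forces `σ_0 = p - 1 - t_0`, and then `r_0 + t_0 + 2 - 2 δ_0` would be an even
multiple of `p` strictly between `0` and `2p`.
-/

lemma digit_zero (p n : ℕ) : digit p n 0 = n % p := by
  simp [digit]

lemma digit_lt {p : ℕ} (hp : 0 < p) (n i : ℕ) : digit p n i < p :=
  Nat.mod_lt _ hp

lemma natCast_digit_zero (p n : ℕ) : ((digit p n 0 : ℕ) : ZMod p) = n := by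
  rw [digit_zero, ZMod.natCast_mod]

lemma natCast_digitSum (p σ : ℕ) (I : Finset ℕ) :
    (digitSum p σ I : ZMod p) = if 0 ∈ I then (σ : ZMod p) else 0 := by
  rw [digitSum, Nat.cast_sum, ← Finset.sum_ite_eq' I 0 fun _ => (σ : ZMod p)]
  refine Finset.sum_congr rfl fun i _ => ?_
  rcases eq_or_ne i 0 with rfl | hi
  · simp [natCast_digit_zero]
  · simp [hi, zero_pow hi]

lemma Int.eq_zero_of_even_of_dvd_of_abs_lt {p x : ℤ} (hp : Odd p) (hx : Even x) (hdvd : p ∣ x)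
    (hlt : |x| < 2 * p) : x = 0 :=
  Int.eq_zero_of_abs_lt_dvd
    ((Int.isCoprime_two_left.mpr hp).mul_dvd (even_iff_two_dvd.mp hx) hdvd) hlt

namespace AdmissibleQuadrupleFor

variable {p r t N σ δ : ℕ} {I : Finset ℕ}

theorem natCast_digit_zero_relations [NeZero p] (h : AdmissibleQuadrupleFor p r t N σ δ I)
    (hN : 1 ≤ N) :
    ((digit p t 0 : ℕ) : ZMod p) + 2 * (if 0 ∈ I then ((digit p σ 0 : ℕ) : ZMod p) else 0) + 1 =
        (digit p σ 0 : ℕ) ∧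
      ((digit p r 0 : ℕ) : ZMod p) + 1 = (digit p σ 0 : ℕ) + 2 * (digit p δ 0 : ℕ) := by
  simp only [natCast_digit_zero]
  obtain ⟨-, heq, hmod⟩ := h
  have hpow : ((p ^ N - 1 : ℕ) : ZMod p) = -1 := by
    rw [Nat.cast_sub (Nat.one_le_pow _ _ (NeZero.pos p)), Nat.cast_pow, ZMod.natCast_self,
      zero_pow (by omega), zero_sub, Nat.cast_one]
  have hA := congrArg (Nat.cast : ℕ → ZMod p) heq
  have hB := (ZMod.natCast_eq_natCast_iff _ _ p).mpr
    (hmod.of_dvd (dvd_mul_of_dvd_right (dvd_pow_self p (by omega)) 2))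
  push_cast [natCast_digitSum, hpow] at hA hB
  constructor
  · linear_combination hA
  · linear_combination hB

theorem digit_add_digit_le (h : AdmissibleQuadrupleFor p r t N σ δ I) {i : ℕ} (hi : i < N) :
    digit p σ i + digit p δ i ≤ p - 1 :=
  h.1.1.2.2.1 i hi

theorem zero_not_mem (h : AdmissibleQuadrupleFor p r t N σ δ I) (hN : 1 ≤ N) (hodd : Odd p)
    (ht0 : digit p t 0 ≠ p - 1) (hpar : digit p r 0 % 2 = digit p t 0 % 2)
    (hge : digit p t 0 ≤ digit p r 0) : 0 ∉ I := by
  intro h0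
  have : NeZero p := ⟨hodd.pos.ne'⟩
  obtain ⟨hA, hB⟩ := h.natCast_digit_zero_relations hN
  rw [if_pos h0] at hA
  have hσδ := h.digit_add_digit_le hN
  have := digit_lt hodd.pos t 0
  have := digit_lt hodd.pos σ 0
  have := digit_lt hodd.pos r 0
  have hcarry : digit p t 0 + digit p σ 0 + 1 = p := by
    have hdvd : (p : ℤ) ∣ digit p t 0 + digit p σ 0 + 1 - p :=
      (ZMod.intCast_zmod_eq_zero_iff_dvd _ p).mp
        (by push_cast; linear_combination hA - ZMod.natCast_self p)
    have := Int.eq_zero_of_abs_lt_dvd hdvd (by rw [abs_lt]; omega)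
    omega
  have hdvd : (p : ℤ) ∣ digit p r 0 + digit p t 0 + 2 - 2 * digit p δ 0 := by
    refine (ZMod.intCast_zmod_eq_zero_iff_dvd _ p).mp ?_
    have hcarry' := congrArg (Nat.cast : ℕ → ZMod p) hcarry
    push_cast at hcarry' ⊢
    linear_combination hB + hcarry' + ZMod.natCast_self p
  have := Int.eq_zero_of_even_of_dvd_of_abs_lt ((Int.odd_coe_nat p).mpr hodd)
    (Int.even_iff.mpr (by omega)) hdvd (by rw [abs_lt]; omega)
  omega

theorem digit_zero_eq (h : AdmissibleQuadrupleFor p r t N σ δ I) (hN : 1 ≤ N) (hodd : Odd p)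
    (ht0 : digit p t 0 ≠ p - 1) (hpar : digit p r 0 % 2 = digit p t 0 % 2) (h0 : 0 ∉ I) :
    digit p σ 0 = digit p t 0 + 1 ∧ 2 * digit p δ 0 + digit p t 0 = digit p r 0 := by
  have : NeZero p := ⟨hodd.pos.ne'⟩
  obtain ⟨hA, hB⟩ := h.natCast_digit_zero_relations hN
  rw [if_neg h0] at hA
  have hσδ := h.digit_add_digit_le hN
  have := digit_lt hodd.pos t 0
  have := digit_lt hodd.pos σ 0
  have := digit_lt hodd.pos r 0
  have hσ : digit p σ 0 = digit p t 0 + 1 := by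
    have hdvd : (p : ℤ) ∣ digit p t 0 + 1 - digit p σ 0 :=
      (ZMod.intCast_zmod_eq_zero_iff_dvd _ p).mp (by push_cast; linear_combination hA)
    have := Int.eq_zero_of_abs_lt_dvd hdvd (by rw [abs_lt]; omega)
    omega
  have hdvd : (p : ℤ) ∣ digit p r 0 - digit p t 0 - 2 * digit p δ 0 :=
    (ZMod.intCast_zmod_eq_zero_iff_dvd _ p).mp (by push_cast; linear_combination hB - hA)
  have := Int.eq_zero_of_even_of_dvd_of_abs_lt ((Int.odd_coe_nat p).mpr hodd)
    (Int.even_iff.mpr (by omega)) hdvd (by rw [abs_lt]; omega)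
  omega

end AdmissibleQuadrupleFor

theorem stmt_13_general (p : ℕ) (hodd : Odd p) (r t : ℕ)
    (ht0 : digit p t 0 ≠ p - 1)
    (hpar : digit p r 0 % 2 = digit p t 0 % 2) (hge : digit p t 0 ≤ digit p r 0)
    (N σ δ : ℕ) (I : Finset ℕ)
    (h : AdmissibleQuadrupleFor p r t N σ δ I) (hN : 1 ≤ N) :
    0 ∉ I ∧ digit p σ 0 = digit p t 0 + 1 ∧
      2 * digit p δ 0 + digit p t 0 = digit p r 0 := by
  have h0 := h.zero_not_mem hN hodd ht0 hpar hge
  exact ⟨h0, h.digit_zero_eq hN hodd ht0 hpar h0⟩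

theorem stmt_13 (p : ℕ) (hp : p.Prime) (hodd : Odd p) (r t : ℕ) (hrt : t ≤ r)
    (hev : Even (r - t)) (ht0 : digit p t 0 ≠ p - 1)
    (hpar : digit p r 0 % 2 = digit p t 0 % 2) (hge : digit p t 0 ≤ digit p r 0)
    (N σ δ : ℕ) (I : Finset ℕ)
    (h : AdmissibleQuadrupleFor p r t N σ δ I) (hN : 1 ≤ N) :
    0 ∉ I ∧ digit p σ 0 = digit p t 0 + 1 ∧
      2 * digit p δ 0 + digit p t 0 = digit p r 0 :=
  stmt_13_general p hodd r t ht0 hpar hge N σ δ I h hN
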